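/- arXiv:1104.5661 — 2 statements merged into one kernel-verified Lean document; each statement's English description precedes it below -/
import Mathlib

section
/- Let G be a finite group with an absolutely irreducible faithful representation ρ : G → GL(n, ℤ) of odd degree n. Then every normal abelian subgroup A of G is an elementary abelian 2-group (i.e., every element of A has order dividing 2). -/
/-!
Over `ℂ` the operators `ρ a`, `a ∈ A`, commute and are diagonalizable, so `ℂⁿ` splits into
common eigenspaces `E χ`, `χ : A → ℂ`. By irreducibility the `G`-orbit of one common eigenvector
spans `ℂⁿ`, hence `ℂⁿ = ⨁ E χ` over the `G`-conjugates `χ` of a single character `χ₀`. As `ρ`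
has integer entries, complex conjugation maps `E χ` onto `E χ̄`, so `χ ↦ χ̄` permutes these
characters preserving `dim E χ`; since `n` is odd, one of them is real, i.e. takes values `±1`.
Then all of them square to `1`, so `ρ (a ^ 2) = 1` and faithfulness gives `a ^ 2 = 1`.
-/

open Module Polynomial

theorem iSupIndep.finrank_biSup {ι K V : Type*} [DivisionRing K] [AddCommGroup V] [Module K V]
    [FiniteDimensional K V] {E : ι → Submodule K V} (hE : iSupIndep E) (s : Finset ι) :
    finrank K ↥(⨆ i ∈ s, E i) = ∑ i ∈ s, finrank K (E i) := by
  classical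
  induction s using Finset.induction_on with
  | empty => simp
  | insert a s ha ih =>
    have hdisj : Disjoint (E a) (⨆ i ∈ s, E i) := hE.disjoint_biSup (by exact_mod_cast ha)
    rw [Finset.iSup_insert, Finset.sum_insert ha, ← ih, ← Submodule.finrank_sup_add_finrank_inf_eq,
      hdisj.eq_bot, finrank_bot, add_zero]

theorem Finset.exists_fixedPoint_of_odd_sum {α : Type*} {s : Finset α} {σ : α → α}
    (hσ : Function.Involutive σ) (hσs : ∀ x ∈ s, σ x ∈ s) {d : α → ℕ} (hd : ∀ x, d (σ x) = d x)
    (hodd : Odd (∑ x ∈ s, d x)) : ∃ x ∈ s, σ x = x := by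
  by_contra! h
  have : ∑ x ∈ s, (d x : ZMod 2) = 0 :=
    Finset.sum_involution (fun x _ ↦ σ x) (fun x _ ↦ by rw [hd]; exact CharTwo.add_self_eq_zero _)
      (fun x hx _ ↦ h x hx) hσs (fun x _ ↦ hσ x)
  rw [← Nat.cast_sum, ZMod.natCast_eq_zero_iff_even] at this
  exact Nat.not_even_iff_odd.mpr hodd this

theorem Complex.sq_eq_one_of_star_eq_of_pow_eq_one {z : ℂ} (hz : star z = z) {m : ℕ}
    (hm : m ≠ 0) (hzm : z ^ m = 1) : z ^ 2 = 1 := by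
  obtain ⟨r, rfl⟩ := Complex.conj_eq_iff_real.mp hz
  rcases (pow_eq_one_iff_of_ne_zero hm).mp (by exact_mod_cast hzm : r ^ m = 1) with h | ⟨h, -⟩ <;>
    simp [h]

namespace Module.End

variable {ι K V : Type*} [Field K] [AddCommGroup V] [Module K V]

def commonEigenspace (f : ι → End K V) (χ : ι → K) : Submodule K V :=
  ⨅ i, (f i).eigenspace (χ i)

theorem isSemisimple_of_pow_eq_one [CharZero K] {g : End K V} {m : ℕ} (hm : m ≠ 0)
    (hg : g ^ m = 1) : g.IsSemisimple :=
  isSemisimple_of_squarefree_aeval_eq_zero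
    (X_pow_sub_one_separable_iff.mpr (by exact_mod_cast hm)).squarefree (by simp [hg])

variable {f : ι → End K V}

theorem mem_commonEigenspace_iff {χ : ι → K} {v : V} :
    v ∈ commonEigenspace f χ ↔ ∀ i, f i v = χ i • v := by
  simp [commonEigenspace]

theorem pow_apply_of_mem_commonEigenspace {χ : ι → K} {v : V} (hv : v ∈ commonEigenspace f χ)
    (i : ι) (m : ℕ) : (f i ^ m) v = χ i ^ m • v := by
  induction m with
  | zero => simp
  | succ m ih =>
    rw [pow_succ, mul_apply, mem_commonEigenspace_iff.mp hv i, map_smul, ih, smul_smul, pow_succ']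

theorem pow_eq_one_of_commonEigenspace_ne_bot {χ : ι → K} (hχ : commonEigenspace f χ ≠ ⊥)
    {i : ι} {m : ℕ} (hm : f i ^ m = 1) : χ i ^ m = 1 := by
  obtain ⟨v, hv, hv0⟩ := Submodule.exists_mem_ne_zero_of_ne_bot hχ
  have := pow_apply_of_mem_commonEigenspace hv i m
  rw [hm, one_apply, eq_comm] at this
  exact smul_left_injective K hv0 (by simpa using this)

theorem pow_eq_one_of_iSup_commonEigenspace_eq_top {κ : Type*} {φ : κ → ι → K}
    (hφ : ⨆ j, commonEigenspace f (φ j) = ⊤) {i : ι} {m : ℕ} (hm : ∀ j, φ j i ^ m = 1) :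
    f i ^ m = 1 := by
  rw [← LinearMap.eqLocus_eq_top, eq_top_iff, ← hφ]
  refine iSup_le fun j v hv ↦ ?_
  simp [LinearMap.mem_eqLocus, pow_apply_of_mem_commonEigenspace hv, hm j]

section Commute

variable (hf : ∀ i j, Commute (f i) (f j))
include hf

theorem iSupIndep_commonEigenspace : iSupIndep (commonEigenspace f) :=
  (independent_iInf_maxGenEigenspace_of_forall_mapsTo f
    fun i j _ ↦ mapsTo_maxGenEigenspace_of_comm (hf j i) _).mono
    fun _ ↦ iInf_mono fun _ ↦ eigenspace_le_maxGenEigenspace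

theorem exists_commonEigenspace_ne_bot [IsAlgClosed K] [FiniteDimensional K V] [Nontrivial V]
    (hss : ∀ i, (f i).IsSemisimple) : ∃ χ, commonEigenspace f χ ≠ ⊥ := by
  by_contra! h
  have htop : ⨆ χ : ι → K, ⨅ i, (f i).maxGenEigenspace (χ i) = ⊤ :=
    iSup_iInf_maxGenEigenspace_eq_top_of_iSup_maxGenEigenspace_eq_top_of_commute f
      (fun i j _ ↦ hf i j) fun i ↦ iSup_maxGenEigenspace_eq_top (f i)
  simp_rw [fun i ↦ (hss i).isFinitelySemisimple.maxGenEigenspace_eq_eigenspace] at htop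
  simp [← commonEigenspace.eq_def, h] at htop

theorem mem_range_of_iSup_commonEigenspace_eq_top {κ : Type*} {φ : κ → ι → K}
    (hφ : ⨆ j, commonEigenspace f (φ j) = ⊤) {χ : ι → K} (hχ : commonEigenspace f χ ≠ ⊥) :
    χ ∈ Set.range φ := by
  by_contra h
  have := (iSupIndep_commonEigenspace hf).disjoint_biSup h
  rw [iSup_range, hφ, disjoint_top] at this
  exact hχ this

end Commute

section Star

variable {V : Type*} [AddCommGroup V] [Module ℂ V] [StarAddMonoid V] [StarModule ℂ V]
  {f : ι → End ℂ V} (hf : ∀ i v, f i (star v) = star (f i v))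
include hf

theorem star_mem_commonEigenspace {χ : ι → ℂ} {v : V} (hv : v ∈ commonEigenspace f χ) :
    star v ∈ commonEigenspace f (star χ) := by
  simp_all [mem_commonEigenspace_iff, star_smul]

theorem finrank_commonEigenspace_star (χ : ι → ℂ) :
    finrank ℂ (commonEigenspace f (star χ)) = finrank ℂ (commonEigenspace f χ) := by
  let e : commonEigenspace f χ ≃+ commonEigenspace f (star χ) :=
    { toFun v := ⟨star v, star_mem_commonEigenspace hf v.2⟩
      invFun v := ⟨star v, by simpa using star_mem_commonEigenspace hf v.2⟩
      left_inv v := by simp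
      right_inv v := by simp
      map_add' v w := by ext; simp }
  exact (congrArg Cardinal.toNat <| rank_eq_of_equiv_equiv star e star_involutive.bijective
    fun c v ↦ by ext; simp [e, star_smul]).symm

theorem commonEigenspace_star_ne_bot {χ : ι → ℂ} (hχ : commonEigenspace f χ ≠ ⊥) :
    commonEigenspace f (star χ) ≠ ⊥ := by
  obtain ⟨v, hv, hv0⟩ := Submodule.exists_mem_ne_zero_of_ne_bot hχ
  exact Submodule.ne_bot_iff _ |>.mpr
    ⟨star v, star_mem_commonEigenspace hf hv, star_ne_zero.mpr hv0⟩

theorem exists_star_eq_of_odd_finrank [FiniteDimensional ℂ V] {κ : Type*} [Finite κ]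
    (hcomm : ∀ i j, Commute (f i) (f j)) {φ : κ → ι → ℂ}
    (hφ : ⨆ j, commonEigenspace f (φ j) = ⊤) (hne : ∀ j, commonEigenspace f (φ j) ≠ ⊥)
    (hodd : Odd (finrank ℂ V)) : ∃ j, star (φ j) = φ j := by
  classical
  cases nonempty_fintype κ
  obtain ⟨χ, hχ, hχ_real⟩ : ∃ χ ∈ Finset.univ.image φ, star χ = χ := by
    refine Finset.exists_fixedPoint_of_odd_sum star_involutive (fun χ hχ ↦ ?_)
      (d := fun χ ↦ finrank ℂ (commonEigenspace f χ)) (finrank_commonEigenspace_star hf) ?_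
    · obtain ⟨j, -, rfl⟩ := Finset.mem_image.mp hχ
      obtain ⟨j', hj'⟩ := mem_range_of_iSup_commonEigenspace_eq_top hcomm hφ
        (commonEigenspace_star_ne_bot hf (hne j))
      exact Finset.mem_image.mpr ⟨j', Finset.mem_univ _, hj'⟩
    · have hXtop : ⨆ χ ∈ Finset.univ.image φ, commonEigenspace f χ = ⊤ := by
        simpa only [Finset.iSup_finset_image, Finset.mem_univ, iSup_true] using hφ
      rwa [← (iSupIndep_commonEigenspace hcomm).finrank_biSup, hXtop, finrank_top]
  obtain ⟨j, -, rfl⟩ := Finset.mem_image.mp hχ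
  exact ⟨j, hχ_real⟩

end Star

end Module.End

open Module.End

namespace Representation

variable {k G V : Type*} [Field k] [Group G] [AddCommGroup V] [Module k V]
  (π : Representation k G V)

theorem span_orbit_eq_top
    (hπ : ∀ W : Submodule k V, (∀ (g : G) (v : V), v ∈ W → π g v ∈ W) → W = ⊥ ∨ W = ⊤)
    {v : V} (hv : v ≠ 0) : Submodule.span k (Set.range fun g ↦ π g v) = ⊤ := by
  refine (hπ _ fun g w hw ↦ ?_).resolve_left fun h ↦ hv ?_
  · induction hw using Submodule.span_induction with
    | mem x hx =>
      obtain ⟨h, rfl⟩ := hx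
      exact Submodule.subset_span ⟨g * h, by simp⟩
    | zero => simp
    | add x y _ _ hx hy => simpa using add_mem hx hy
    | smul c x _ hx => simpa using Submodule.smul_mem _ c hx
  · simpa [h] using Submodule.subset_span (R := k) (Set.mem_range_self (f := fun g ↦ π g v) 1)

variable {A : Subgroup G} [A.Normal]

theorem apply_mem_commonEigenspace_comp_conjNormal {χ : A → k} {v : V}
    (hv : v ∈ commonEigenspace (π.comp A.subtype) χ) (g : G) :
    π g v ∈ commonEigenspace (π.comp A.subtype) (χ ∘ (MulAut.conjNormal g).symm) := by
  rw [mem_commonEigenspace_iff] at hv ⊢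
  intro a
  have hconj : π (g⁻¹ * a * g) v = χ ((MulAut.conjNormal g).symm a) • v := by
    simpa using hv ((MulAut.conjNormal g).symm a)
  calc π a (π g v) = π g (π (g⁻¹ * a * g) v) := by
        simp [← Module.End.mul_apply, ← map_mul, mul_assoc]
    _ = _ := by rw [hconj, map_smul]; rfl

theorem commonEigenspace_comp_conjNormal_ne_bot {χ : A → k}
    (hχ : commonEigenspace (π.comp A.subtype) χ ≠ ⊥) (g : G) :
    commonEigenspace (π.comp A.subtype) (χ ∘ (MulAut.conjNormal g).symm) ≠ ⊥ := by
  obtain ⟨v, hv, hv0⟩ := Submodule.exists_mem_ne_zero_of_ne_bot hχ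
  exact Submodule.ne_bot_iff _ |>.mpr ⟨π g v, π.apply_mem_commonEigenspace_comp_conjNormal hv g,
    (map_ne_zero_iff _ (π.apply_bijective g).injective).mpr hv0⟩

theorem iSup_commonEigenspace_comp_conjNormal_eq_top
    (hπ : ∀ W : Submodule k V, (∀ (g : G) (v : V), v ∈ W → π g v ∈ W) → W = ⊥ ∨ W = ⊤)
    {χ : A → k} (hχ : commonEigenspace (π.comp A.subtype) χ ≠ ⊥) :
    ⨆ g : G, commonEigenspace (π.comp A.subtype) (χ ∘ (MulAut.conjNormal g).symm) = ⊤ := by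
  obtain ⟨v, hv, hv0⟩ := Submodule.exists_mem_ne_zero_of_ne_bot hχ
  rw [eq_top_iff, ← π.span_orbit_eq_top hπ hv0, Submodule.span_le]
  rintro _ ⟨g, rfl⟩
  exact le_iSup (fun g ↦ commonEigenspace (π.comp A.subtype) (χ ∘ (MulAut.conjNormal g).symm)) g
    (π.apply_mem_commonEigenspace_comp_conjNormal hv g)

end Representation

section Complexify

variable {G ι : Type*} [Group G] [Fintype ι] [DecidableEq ι]

noncomputable def complexify (ρ : G →* GL ι ℤ) : Representation ℂ G (ι → ℂ) :=
  (Matrix.toLinAlgEquiv' : Matrix ι ι ℂ ≃ₐ[ℂ] End ℂ (ι → ℂ)).toRingEquiv.toMonoidHom.comp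
    ((Int.castRingHom ℂ).mapMatrix.toMonoidHom.comp ((Units.coeHom _).comp ρ))

theorem complexify_apply (ρ : G →* GL ι ℤ) (g : G) (v : ι → ℂ) :
    complexify ρ g v = ((ρ g : Matrix ι ι ℤ).map (Int.cast : ℤ → ℂ)).mulVec v :=
  rfl

theorem complexify_star (ρ : G →* GL ι ℤ) (g : G) (v : ι → ℂ) :
    complexify ρ g (star v) = star (complexify ρ g v) := by
  ext i
  simp [complexify_apply, Matrix.mulVec, dotProduct, star_sum]

theorem complexify_injective {ρ : G →* GL ι ℤ} (hρ : Function.Injective ρ) :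
    Function.Injective (complexify ρ) :=
  Matrix.toLinAlgEquiv'.injective.comp <| (Matrix.map_injective Int.cast_injective).comp <|
    Units.val_injective.comp hρ

end Complexify

/-- If a finite group has a faithful absolutely irreducible integral representation of
odd degree, then every normal abelian subgroup is elementary abelian of exponent 2. -/
theorem stmt_1 {G : Type*} [Group G] [Finite G] (n : ℕ) (hn : Odd n) (hpos : 0 < n)
    (ρ : G →* GL (Fin n) ℤ) (hfaith : Function.Injective ρ)
    (hCirr : ∀ W : Submodule ℂ (Fin n → ℂ),
      (∀ (g : G) (v : Fin n → ℂ), v ∈ W →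
        ((ρ g : Matrix (Fin n) (Fin n) ℤ).map (Int.cast : ℤ → ℂ)).mulVec v ∈ W) →
      W = ⊥ ∨ W = ⊤)
    (A : Subgroup G) (hA : A.Normal) (hAab : ∀ a ∈ A, ∀ b ∈ A, a * b = b * a) :
    ∀ a ∈ A, a ^ 2 = 1 := by
  have : NeZero n := ⟨hpos.ne'⟩
  set π := complexify ρ
  have hcomm (a b : A) : Commute (π.comp A.subtype a) (π.comp A.subtype b) :=
    (show Commute (a : G) b from hAab a a.2 b b.2).map π
  have hπ_pow (g : G) : π g ^ Nat.card G = 1 := by rw [← map_pow, pow_card_eq_one', map_one]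
  obtain ⟨χ₀, hχ₀⟩ := exists_commonEigenspace_ne_bot hcomm
    fun a ↦ isSemisimple_of_pow_eq_one Nat.card_pos.ne' (hπ_pow a)
  have htop := π.iSup_commonEigenspace_comp_conjNormal_eq_top hCirr hχ₀
  obtain ⟨g, hg⟩ := exists_star_eq_of_odd_finrank (f := π.comp A.subtype)
    (fun a v ↦ complexify_star ρ a v) hcomm htop
    (π.commonEigenspace_comp_conjNormal_ne_bot hχ₀) (by rwa [finrank_fin_fun])
  have hχ₀_sq (b : A) : χ₀ b ^ 2 = 1 := by
    simpa using Complex.sq_eq_one_of_star_eq_of_pow_eq_one (congrFun hg (MulAut.conjNormal g b))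
      Nat.card_pos.ne' (pow_eq_one_of_commonEigenspace_ne_bot
        (π.commonEigenspace_comp_conjNormal_ne_bot hχ₀ g) (hπ_pow _))
  intro a ha
  apply complexify_injective hfaith
  rw [map_pow, map_one]
  exact pow_eq_one_of_iSup_commonEigenspace_eq_top (i := ⟨a, ha⟩) htop fun g ↦ hχ₀_sq _
end

section
/- Let ρ : G → GL(n, ℤ) be a faithful ℝ-irreducible representation of a finite group G. Then the normalizer of ρ(G) in GL(n, ℤ) is a finite group. -/
/-!
Averaging gives a positive definite form `B = ∑ g, ρ(g)ᵀ ρ(g)` invariant under `ρ(G)`. If `D`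
normalizes `ρ(G)`, then `Dᵀ B D` is again invariant, so by Schur's lemma (ℝ-irreducibility) it
equals `t • B`; since `det D = ±1` and both forms are positive definite, `t = 1`. Thus the
normalizer preserves `B`, and as `B ≥ 1` this bounds every entry: `D i j ^ 2 ≤ B j j`. Only finitely
many integer matrices satisfy these bounds.
-/

theorem Int.finite_setOf_intCast_sq_le (c : ℝ) : {x : ℤ | (x : ℝ) ^ 2 ≤ c}.Finite := by
  refine (Set.finite_Icc (-⌈c⌉) ⌈c⌉).subset fun x hx => abs_le.mp ?_
  have hx' : ((|x| : ℤ) : ℝ) ≤ ⌈c⌉ :=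
    calc ((|x| : ℤ) : ℝ) ≤ ((x ^ 2 : ℤ) : ℝ) := by
          exact_mod_cast Int.natCast_natAbs x ▸ Int.natAbs_le_self_sq x
      _ ≤ c := by exact_mod_cast hx
      _ ≤ ⌈c⌉ := Int.le_ceil c
  exact_mod_cast hx'

namespace Matrix

variable {ι : Type*} [Fintype ι] [DecidableEq ι]

open scoped MatrixOrder in
theorem exists_mulVec_eq_smul_mulVec_of_posDef [Nonempty ι] {B S : Matrix ι ι ℝ}
    (hB : B.PosDef) (hS : S.IsHermitian) :
    ∃ (t : ℝ) (v : ι → ℝ), v ≠ 0 ∧ S *ᵥ v = t • (B *ᵥ v) := by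
  -- with `C = √B`, take `v = C⁻¹ w` for an eigenvector `w` of the symmetric matrix `C⁻¹ S C⁻¹`
  set C := CFC.sqrt B
  have hCC : C * C = B := CFC.sqrt_mul_sqrt_self B hB.posSemidef.nonneg
  have hC : IsUnit C := by
    rw [isUnit_iff_isUnit_det]
    refine isUnit_iff_ne_zero.mpr fun h => hB.det_pos.ne' ?_
    rw [← hCC, det_mul, h, zero_mul]
  have hCinv : C * C⁻¹ = 1 := mul_nonsing_inv C ((isUnit_iff_isUnit_det C).mp hC)
  have hCH : C⁻¹.IsHermitian := (nonneg_iff_posSemidef.mp (CFC.sqrt_nonneg B)).isHermitian.inv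
  have hM : (C⁻¹ * S * C⁻¹).IsHermitian := by
    rw [IsHermitian, conjTranspose_mul, conjTranspose_mul, hCH.eq, hS.eq, Matrix.mul_assoc]
  let i := Classical.arbitrary ι
  let w : ι → ℝ := hM.eigenvectorBasis i
  refine ⟨hM.eigenvalues i, C⁻¹ *ᵥ w, ?_, ?_⟩
  · have hw : w ≠ 0 := fun h => hM.eigenvectorBasis.orthonormal.ne_zero i (by
      ext k; exact congrFun h k)
    intro h
    have hCw := congrArg (C *ᵥ ·) h
    simp only [mulVec_mulVec, hCinv, one_mulVec, mulVec_zero] at hCw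
    exact hw hCw
  · have hSC : S * C⁻¹ = C * (C⁻¹ * S * C⁻¹) := by
      rw [← Matrix.mul_assoc, ← Matrix.mul_assoc, hCinv, Matrix.one_mul]
    rw [mulVec_mulVec, hSC, ← mulVec_mulVec, hM.mulVec_eigenvectorBasis i, mulVec_smul,
      mulVec_mulVec (M := B), ← hCC, Matrix.mul_assoc C C, hCinv, Matrix.mul_one]

theorem PosDef.eq_of_eq_smul_of_det_eq {S B : Matrix ι ι ℝ} {t : ℝ} (hS : S.PosDef)
    (hB : B.PosDef) (hSB : S = t • B) (hdet : S.det = B.det) : S = B := by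
  cases isEmpty_or_nonempty ι
  · exact Subsingleton.elim _ _
  obtain ⟨i⟩ := ‹Nonempty ι›
  have hx : (Pi.single i 1 : ι → ℝ) ≠ 0 := by simp
  have ht : 0 < t := by
    have hSx := hS.dotProduct_mulVec_pos hx
    rw [hSB, smul_mulVec, dotProduct_smul, smul_eq_mul] at hSx
    exact pos_of_mul_pos_left hSx (hB.dotProduct_mulVec_pos hx).le
  have htn : t ^ Fintype.card ι = 1 := by
    rw [hSB, det_smul] at hdet
    exact mul_right_cancel₀ hB.det_pos.ne' (hdet.trans (one_mul _).symm)
  rw [hSB, (pow_eq_one_iff_of_nonneg ht.le Fintype.card_ne_zero).mp htn, one_smul]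

theorem sq_apply_le_of_conjTranspose_mul_mul_eq {B D : Matrix ι ι ℝ}
    (hB : ∀ v, v ⬝ᵥ v ≤ v ⬝ᵥ (B *ᵥ v)) (hD : Dᴴ * B * D = B) (i j : ι) :
    D i j ^ 2 ≤ B j j := by
  set w := D *ᵥ Pi.single j 1
  calc D i j ^ 2 = w i * w i := by simp [w, sq]
    _ ≤ w ⬝ᵥ w := Finset.single_le_sum (f := fun k => w k * w k)
        (fun k _ => mul_self_nonneg (w k)) (Finset.mem_univ i)
    _ ≤ w ⬝ᵥ (B *ᵥ w) := hB w
    _ = Pi.single j 1 ⬝ᵥ ((Dᴴ * B * D) *ᵥ Pi.single j 1) := by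
        rw [conjTranspose_eq_transpose_of_trivial, ← mulVec_mulVec, ← mulVec_mulVec,
          dotProduct_mulVec (Pi.single j 1), vecMul_transpose]
    _ = B j j := by rw [hD, mulVec_single_one, single_one_dotProduct, col_apply]

section InvariantForm

variable {G : Type*} [Group G] (R : G →* GL ι ℝ)

def IsInvariantForm (S : Matrix ι ι ℝ) : Prop :=
  ∀ g, (R g : Matrix ι ι ℝ)ᴴ * S * R g = S

variable {R}

theorem IsInvariantForm.mul_eq {S : Matrix ι ι ℝ} (hS : IsInvariantForm R S) (g : G) :
    S * R g = (R g⁻¹ : Matrix ι ι ℝ)ᴴ * S := by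
  conv_lhs => rw [← hS g⁻¹]
  rw [Matrix.mul_assoc _ (R g⁻¹ : Matrix ι ι ℝ), ← GeneralLinearGroup.coe_mul, ← map_mul,
    inv_mul_cancel, map_one, GeneralLinearGroup.coe_one, Matrix.mul_one]

theorem IsInvariantForm.conjTranspose_mul_mul {S : Matrix ι ι ℝ} (hS : IsInvariantForm R S)
    {D : GL ι ℝ} (hD : ∀ g, ∃ g', D * R g = R g' * D) :
    IsInvariantForm R ((D : Matrix ι ι ℝ)ᴴ * S * D) := by
  intro g
  obtain ⟨g', hg'⟩ := hD g
  have hDg : (D : Matrix ι ι ℝ) * R g = R g' * D := by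
    simpa using congrArg Units.val hg'
  calc (R g : Matrix ι ι ℝ)ᴴ * ((D : Matrix ι ι ℝ)ᴴ * S * D) * R g
      = ((D : Matrix ι ι ℝ) * (R g : Matrix ι ι ℝ))ᴴ * S * ((D : Matrix ι ι ℝ) * R g) := by
        simp only [conjTranspose_mul, Matrix.mul_assoc]
    _ = (D : Matrix ι ι ℝ)ᴴ * ((R g' : Matrix ι ι ℝ)ᴴ * S * R g') * D := by
        rw [hDg]; simp only [conjTranspose_mul, Matrix.mul_assoc]
    _ = (D : Matrix ι ι ℝ)ᴴ * S * D := by rw [hS g']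

theorem IsInvariantForm.exists_eq_smul
    (hirr : ∀ W : Submodule ℝ (ι → ℝ), (∀ g, ∀ v ∈ W, (R g : Matrix ι ι ℝ) *ᵥ v ∈ W) →
      W = ⊥ ∨ W = ⊤)
    {B S : Matrix ι ι ℝ} (hB : B.PosDef) (hBR : IsInvariantForm R B) (hS : S.IsHermitian)
    (hSR : IsInvariantForm R S) : ∃ t : ℝ, S = t • B := by
  cases isEmpty_or_nonempty ι
  · exact ⟨0, Subsingleton.elim _ _⟩
  -- Schur: for a generalized eigenvalue `t`, `ker (S - t • B)` is a nonzero invariant subspace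
  obtain ⟨t, v, hv, hSv⟩ := exists_mulVec_eq_smul_mulVec_of_posDef hB hS
  have hcomm : ∀ g, (S - t • B) * R g = (R g⁻¹ : Matrix ι ι ℝ)ᴴ * (S - t • B) := fun g => by
    rw [Matrix.sub_mul, Matrix.mul_sub, hSR.mul_eq, Matrix.smul_mul, Matrix.mul_smul, hBR.mul_eq]
  let W := LinearMap.ker (S - t • B).toLin'
  have hvW : v ∈ W := by simp [W, hSv]
  have hWinv : ∀ g, ∀ u ∈ W, (R g : Matrix ι ι ℝ) *ᵥ u ∈ W := fun g u hu => by
    simp only [W, LinearMap.mem_ker, toLin'_apply] at hu ⊢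
    rw [mulVec_mulVec, hcomm, ← mulVec_mulVec, hu, mulVec_zero]
  rcases hirr W hWinv with hW | hW
  · exact absurd ((Submodule.mem_bot ℝ).mp (hW ▸ hvW)) hv
  · refine ⟨t, sub_eq_zero.mp (toLin'.injective ?_)⟩
    rw [map_zero]
    exact LinearMap.ker_eq_top.mp hW

variable [Fintype G] (R)

def invariantForm : Matrix ι ι ℝ :=
  ∑ g, (R g : Matrix ι ι ℝ)ᴴ * R g

theorem dotProduct_invariantForm_mulVec (v : ι → ℝ) :
    v ⬝ᵥ (invariantForm R *ᵥ v) =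
      ∑ g, ((R g : Matrix ι ι ℝ) *ᵥ v) ⬝ᵥ ((R g : Matrix ι ι ℝ) *ᵥ v) := by
  simp only [invariantForm, sum_mulVec, dotProduct_sum, ← mulVec_mulVec, dotProduct_mulVec v,
    conjTranspose_eq_transpose_of_trivial, vecMul_transpose]

theorem dotProduct_self_le_dotProduct_invariantForm_mulVec (v : ι → ℝ) :
    v ⬝ᵥ v ≤ v ⬝ᵥ (invariantForm R *ᵥ v) := by
  rw [dotProduct_invariantForm_mulVec]
  calc v ⬝ᵥ v = ((R 1 : Matrix ι ι ℝ) *ᵥ v) ⬝ᵥ ((R 1 : Matrix ι ι ℝ) *ᵥ v) := by simp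
    _ ≤ _ := Finset.single_le_sum
        (f := fun g => ((R g : Matrix ι ι ℝ) *ᵥ v) ⬝ᵥ ((R g : Matrix ι ι ℝ) *ᵥ v))
        (fun g _ => dotProduct_self_star_nonneg _) (Finset.mem_univ 1)

theorem invariantForm_posDef : (invariantForm R).PosDef := by
  refine .of_dotProduct_mulVec_pos ?_ fun v hv => ?_
  · simp only [IsHermitian, invariantForm, conjTranspose_sum, conjTranspose_mul,
      conjTranspose_conjTranspose]
  · rw [star_trivial]
    exact (dotProduct_self_star_pos_iff.mpr hv).trans_le
      (dotProduct_self_le_dotProduct_invariantForm_mulVec R v)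

theorem isInvariantForm_invariantForm : IsInvariantForm R (invariantForm R) := by
  intro h
  simp only [invariantForm, Finset.mul_sum, Finset.sum_mul]
  refine Fintype.sum_equiv (Equiv.mulRight h) _ _ fun g => ?_
  simp only [Equiv.coe_mulRight, map_mul, GeneralLinearGroup.coe_mul, conjTranspose_mul,
    Matrix.mul_assoc]

variable {R}

theorem conjTranspose_mul_invariantForm_mul_eq_self
    (hirr : ∀ W : Submodule ℝ (ι → ℝ), (∀ g, ∀ v ∈ W, (R g : Matrix ι ι ℝ) *ᵥ v ∈ W) →
      W = ⊥ ∨ W = ⊤)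
    {D : GL ι ℝ} (hdet : (D : Matrix ι ι ℝ).det ^ 2 = 1) (hD : ∀ g, ∃ g', D * R g = R g' * D) :
    (D : Matrix ι ι ℝ)ᴴ * invariantForm R * D = invariantForm R := by
  have hB := invariantForm_posDef R
  have hS : ((D : Matrix ι ι ℝ)ᴴ * invariantForm R * D).PosDef :=
    hB.conjTranspose_mul_mul_same (mulVec_injective_iff_isUnit.mpr D.isUnit)
  have hBR := isInvariantForm_invariantForm R
  obtain ⟨t, ht⟩ := IsInvariantForm.exists_eq_smul hirr hB hBR hS.isHermitian
    (hBR.conjTranspose_mul_mul hD)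
  refine hS.eq_of_eq_smul_of_det_eq hB ht ?_
  rw [det_mul, det_mul, det_conjTranspose, star_trivial]
  linear_combination (invariantForm R).det * hdet

end InvariantForm

namespace GeneralLinearGroup

theorem det_map_intCast_sq (D : GL ι ℤ) :
    (map (Int.castRingHom ℝ) D : Matrix ι ι ℝ).det ^ 2 = 1 := by
  rw [← val_det_apply, ← Units.val_pow_eq_pow_val, GeneralLinearGroup.map_det, ← map_pow,
    Int.units_sq, map_one, Units.val_one]

theorem finite_setOf_intCast_apply_sq_le (c : ι → ℝ) :
    {D : GL ι ℤ | ∀ i j, ((D : Matrix ι ι ℤ) i j : ℝ) ^ 2 ≤ c j}.Finite := by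
  have hmat : {M : Matrix ι ι ℤ | ∀ i j, (M i j : ℝ) ^ 2 ≤ c j}.Finite := by
    have := Set.Finite.pi fun _ : ι => Set.Finite.pi fun j => Int.finite_setOf_intCast_sq_le (c j)
    simp only [Set.pi, Set.mem_univ, Set.mem_ofPred_eq, forall_const] at this
    exact this
  exact hmat.preimage fun _ _ _ _ h => Units.ext h

end GeneralLinearGroup

end Matrix

theorem MonoidHom.exists_mul_eq_mul_of_mem_normalizer_range {G H : Type*} [Group G] [Group H]
    (f : G →* H) {x : H} (hx : x ∈ Subgroup.normalizer (f.range : Set H)) (g : G) :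
    ∃ g', x * f g = f g' * x := by
  obtain ⟨g', hg'⟩ := (Subgroup.mem_normalizer_iff.mp hx (f g)).mp ⟨g, rfl⟩
  exact ⟨g', mul_inv_eq_iff_eq_mul.mp hg'.symm⟩

open Matrix

theorem stmt_14_general {G : Type*} [Group G] [Finite G] (n : ℕ)
    (ρ : G →* GL (Fin n) ℤ)
    (hRirr : ∀ W : Submodule ℝ (Fin n → ℝ),
      (∀ (g : G) (v : Fin n → ℝ), v ∈ W →
        ((ρ g : Matrix (Fin n) (Fin n) ℤ).map (Int.cast : ℤ → ℝ)).mulVec v ∈ W) →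
      W = ⊥ ∨ W = ⊤) :
    Finite (Subgroup.normalizer (ρ.range : Set (GL (Fin n) ℤ))) := by
  have := Fintype.ofFinite G
  let toReal := GeneralLinearGroup.map (n := Fin n) (Int.castRingHom ℝ)
  let B := invariantForm (toReal.comp ρ)
  have hB : ∀ D ∈ Subgroup.normalizer (ρ.range : Set (GL (Fin n) ℤ)),
      (toReal D : Matrix (Fin n) (Fin n) ℝ)ᴴ * B * toReal D = B := fun D hD =>
    conjTranspose_mul_invariantForm_mul_eq_self hRirr (GeneralLinearGroup.det_map_intCast_sq D)
      fun g => (ρ.exists_mul_eq_mul_of_mem_normalizer_range hD g).imp fun g' h => by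
        simpa using congrArg toReal h
  refine Set.Finite.to_subtype <| (GeneralLinearGroup.finite_setOf_intCast_apply_sq_le
    fun j => B j j).subset fun D hD i j => ?_
  exact sq_apply_le_of_conjTranspose_mul_mul_eq
    (dotProduct_self_le_dotProduct_invariantForm_mulVec _) (hB D hD) i j

/-- The normalizer in GL(n,ℤ) of the image of a faithful ℝ-irreducible integral
representation of a finite group is finite. -/
theorem stmt_14 {G : Type*} [Group G] [Finite G] (n : ℕ)
    (ρ : G →* GL (Fin n) ℤ) (hfaith : Function.Injective ρ)
    (hRirr : ∀ W : Submodule ℝ (Fin n → ℝ),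
      (∀ (g : G) (v : Fin n → ℝ), v ∈ W →
        ((ρ g : Matrix (Fin n) (Fin n) ℤ).map (Int.cast : ℤ → ℝ)).mulVec v ∈ W) →
      W = ⊥ ∨ W = ⊤) :
    Finite (Subgroup.normalizer (ρ.range : Set (GL (Fin n) ℤ))) :=
  stmt_14_general n ρ hRirr
end
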